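/- arXiv:1204.0623 — 2 statements merged into one kernel-verified Lean document; each statement's English description precedes it below -/
import Mathlib

section
/- If r, r', d are positive and small (say all in (0, 1/10)) satisfying the triangle inequalities, and α₀, α_K are the corresponding angles opposite r in the flat plane and on the unit sphere respectively, then sin α₀ and sin α_K are comparable: there exist absolute constants c, C > 0 such that c·sin α₀ ≤ sin α_K ≤ C·sin α₀. -/
/-!
Both angles are governed by a Heron-type formula in the semiperimeter `s = (r + r' + d) / 2`:
in the plane `(sin α₀ · r' d)² = 4 s (s - r) (s - r') (s - d)`, and on the unit sphere
`(sin α_K · sin r' sin d)² = 4 sin s sin (s - r) sin (s - r') sin (s - d)`, which follows from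
`sin² α_K (sin r' sin d)² = (cos (d - r') - cos r) (cos r - cos (d + r'))` by the sum-to-product
formulas. For arguments in `[0, π/2]` Jordan's inequality `2/π · x ≤ sin x ≤ x` makes every
sine comparable to its argument, so the two formulas give `c = (2/π)²` and `C = (π/2)²`.
-/

open Real Finset

/-- `s - d, s - r', s - r, s` for the semiperimeter `s` of the triangle with sides `r, r', d`. -/
noncomputable def heronFactors (r r' d : ℝ) : Fin 4 → ℝ :=
  ![(r + r' - d) / 2, (r + d - r') / 2, (d + r' - r) / 2, (r + d + r') / 2]

theorem heronFactors_mem_Ioc {r r' d M : ℝ} (hr' : 0 < r') (hd : 0 < d)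
    (h₁ : |d - r'| < r) (h₂ : r < d + r') (hM : r + d + r' ≤ 2 * M) (i : Fin 4) :
    heronFactors r r' d i ∈ Set.Ioc 0 M := by
  obtain ⟨h₃, h₄⟩ := abs_lt.mp h₁
  fin_cases i <;> simp [heronFactors] <;> constructor <;> linarith

theorem heron_of_cos_eq {α r r' d : ℝ} (hr' : r' ≠ 0) (hd : d ≠ 0)
    (h : cos α = (d ^ 2 + r' ^ 2 - r ^ 2) / (2 * d * r')) :
    (sin α * (r' * d)) ^ 2 = 4 * ∏ i, heronFactors r r' d i := by
  simp only [heronFactors, Fin.prod_univ_four, Matrix.cons_val]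
  rw [mul_pow, sin_sq, h]
  field_simp
  ring

theorem spherical_heron_of_cos_eq {α r r' d : ℝ} (hr' : sin r' ≠ 0)
    (hd : sin d ≠ 0) (h : cos α = (cos r - cos r' * cos d) / (sin r' * sin d)) :
    (sin α * (sin r' * sin d)) ^ 2 = 4 * ∏ i, sin (heronFactors r r' d i) := by
  have h_factor : (sin α * (sin r' * sin d)) ^ 2
      = (cos (d - r') - cos r) * (cos r - cos (d + r')) := by
    rw [mul_pow, sin_sq, h, cos_sub, cos_add]
    field_simp
    ring
  simp only [heronFactors, Fin.prod_univ_four, Matrix.cons_val]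
  rw [h_factor, cos_sub_cos, cos_sub_cos,
    show (d - r' - r) / 2 = -((r + r' - d) / 2) by ring,
    show (r - (d + r')) / 2 = -((d + r' - r) / 2) by ring, sin_neg, sin_neg,
    show (d - r' + r) / 2 = (r + d - r') / 2 by ring,
    show (r + (d + r')) / 2 = (r + d + r') / 2 by ring]
  ring

theorem prod_sin_bounds {ι : Type*} (s : Finset ι) {x : ι → ℝ}
    (hx : ∀ i ∈ s, x i ∈ Set.Icc 0 (π / 2)) :
    (2 / π) ^ #s * ∏ i ∈ s, x i ≤ ∏ i ∈ s, sin (x i) ∧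
      ∏ i ∈ s, sin (x i) ≤ ∏ i ∈ s, x i := by
  constructor
  · rw [← prod_const, ← prod_mul_distrib]
    exact prod_le_prod (fun i hi => by have := (hx i hi).1; positivity)
      fun i hi => mul_le_sin (hx i hi).1 (hx i hi).2
  · exact prod_le_prod (fun i hi => sin_nonneg_of_nonneg_of_le_pi (hx i hi).1
      ((hx i hi).2.trans (by linarith [pi_pos]))) fun i hi => sin_le (hx i hi).1

theorem comparable_of_sq_mul_sq_le {k p q U V : ℝ} (hk : 0 ≤ k) (hp : 0 ≤ p) (hq : 0 ≤ q)
    (hU : 0 < U) (hpq : k ^ 2 * (p * U) ^ 2 ≤ (q * V) ^ 2) (hqp : (q * V) ^ 2 ≤ (p * U) ^ 2)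
    (hUV : k * U ≤ V) (hVU : V ≤ U) :
    k * p ≤ q ∧ k * q ≤ p := by
  have hV : 0 ≤ V := (mul_nonneg hk hU.le).trans hUV
  constructor
  · have : k * p * U ≤ q * V :=
      le_of_pow_le_pow_left₀ two_ne_zero (mul_nonneg hq hV) <| by
        rwa [mul_assoc, mul_pow]
    exact le_of_mul_le_mul_right (this.trans (mul_le_mul_of_nonneg_left hVU hq)) hU
  · have : q * V ≤ p * U :=
      le_of_pow_le_pow_left₀ two_ne_zero (mul_nonneg hp hU.le) hqp
    refine le_of_mul_le_mul_right ?_ hU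
    calc k * q * U = q * (k * U) := by ring
      _ ≤ q * V := mul_le_mul_of_nonneg_left hUV hq
      _ ≤ p * U := this

/-- For small triangles (all side lengths in `(0, 1/10)`) satisfying the triangle
inequalities, the sine of the angle opposite `r` in the flat comparison triangle and
in the unit-sphere comparison triangle are comparable, with absolute constants. -/
theorem stmt8 :
    ∃ c > 0, ∃ C > 0, ∀ r r' d α₀ αK : ℝ,
      r ∈ Set.Ioo (0 : ℝ) (1 / 10) → r' ∈ Set.Ioo (0 : ℝ) (1 / 10) →
      d ∈ Set.Ioo (0 : ℝ) (1 / 10) → |d - r'| < r → r < d + r' →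
      α₀ ∈ Set.Icc 0 Real.pi → αK ∈ Set.Icc 0 Real.pi →
      Real.cos α₀ = (d ^ 2 + r' ^ 2 - r ^ 2) / (2 * d * r') →
      Real.cos αK = (Real.cos r - Real.cos r' * Real.cos d) / (Real.sin r' * Real.sin d) →
      c * Real.sin α₀ ≤ Real.sin αK ∧ Real.sin αK ≤ C * Real.sin α₀ := by
  refine ⟨(2 / π) ^ 2, by positivity, (π / 2) ^ 2, by positivity, ?_⟩
  intro r r' d α₀ αK ⟨hr0, hr1⟩ ⟨hr'0, hr'1⟩ ⟨hd0, hd1⟩ htri₁ htri₂ hα₀ hαK hcos₀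
    hcosK
  have hr'_sin : 0 < sin r' := sin_pos_of_pos_of_lt_pi hr'0 (by linarith [pi_gt_three])
  have hd_sin : 0 < sin d := sin_pos_of_pos_of_lt_pi hd0 (by linarith [pi_gt_three])
  obtain ⟨hPQ, hQP⟩ := prod_sin_bounds univ (x := heronFactors r r' d) fun i _ =>
    Set.Ioc_subset_Icc_self <|
      heronFactors_mem_Ioc hr'0 hd0 htri₁ htri₂ (by linarith [pi_gt_three]) i
  obtain ⟨hUV, hVU⟩ :
      (2 / π) ^ 2 * (r' * d) ≤ sin r' * sin d ∧ sin r' * sin d ≤ r' * d := by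
    simpa [Fin.prod_univ_two] using prod_sin_bounds univ (x := ![r', d]) fun i _ => by
      fin_cases i <;> simp <;> constructor <;> linarith [pi_gt_three]
  rw [card_univ, Fintype.card_fin] at hPQ
  have hplane := heron_of_cos_eq hr'0.ne' hd0.ne' hcos₀
  have hsphere := spherical_heron_of_cos_eq hr'_sin.ne' hd_sin.ne' hcosK
  obtain ⟨hlow, hup⟩ := comparable_of_sq_mul_sq_le (k := (2 / π) ^ 2) (by positivity)
    (sin_nonneg_of_mem_Icc hα₀) (sin_nonneg_of_mem_Icc hαK) (mul_pos hr'0 hd0)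
    (by rw [hplane, hsphere, ← pow_mul]; linarith)
    (by rw [hplane, hsphere]; linarith) hUV hVU
  refine ⟨hlow, ?_⟩
  calc sin αK = (π / 2) ^ 2 * ((2 / π) ^ 2 * sin αK) := by field_simp
    _ ≤ (π / 2) ^ 2 * sin α₀ := by gcongr
end

section
/- Suppose r, r', d ∈ (0, 1/10) satisfy the triangle inequalities and additionally d² + r'² > r² (equivalently the flat angle α₀ opposite r is acute). Then the spherical angle α_K (opposite r on the unit sphere) is bounded away from π: 1 + cos α_K ≥ c for an absolute constant c > 0. Specifically, 1 + cos α_K = (cos r − cos(d + r'))/(sin d sin r') = 2 sin((d+r'−r)/2) sin((d+r'+r)/2)/(sin d sin r') ≥ c. -/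
/-!
Adding `1` to the spherical law of cosines turns its numerator into `cos r − cos (d + r')`,
which the product formula writes as `2 sin a sin b` with `a = (d + r' − r)/2`, `b = (d + r' + r)/2`.
Once `d + r' + r ≤ π`, Jordan's inequality `sin x ≥ (2/π) x` and `sin x ≤ x` compare this with the
flat quantities: `4ab = d² + r'² − r² + 2dr' > 2dr'` exactly because the flat angle is acute,
so `1 + cos α_K ≥ 4/π²`.
-/

open Real

theorem one_add_cos_eq_of_cos_eq {α r r' d : ℝ} (hd : sin d ≠ 0) (hr' : sin r' ≠ 0)
    (hα : cos α = (cos r - cos r' * cos d) / (sin r' * sin d)) :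
    1 + cos α = (cos r - cos (d + r')) / (sin d * sin r') := by
  rw [hα, cos_add, mul_comm (sin d)]
  field_simp
  ring

theorem cos_sub_cos_add_eq (r r' d : ℝ) :
    cos r - cos (d + r') = 2 * sin ((d + r' - r) / 2) * sin ((d + r' + r) / 2) := by
  rw [two_mul_sin_mul_sin, show (d + r' - r) / 2 - (d + r' + r) / 2 = -r by ring, cos_neg,
    show (d + r' - r) / 2 + (d + r' + r) / 2 = d + r' by ring]

theorem four_div_pi_sq_mul_sin_mul_sin_le {r r' d : ℝ} (hr : 0 ≤ r) (hd : 0 ≤ d)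
    (hr' : 0 ≤ r') (htri : r < d + r') (hsum : d + r' + r ≤ π) (hacute : r ^ 2 < d ^ 2 + r' ^ 2) :
    4 / π ^ 2 * (sin d * sin r') ≤
      2 * sin ((d + r' - r) / 2) * sin ((d + r' + r) / 2) := by
  set a := (d + r' - r) / 2 with ha_def
  set b := (d + r' + r) / 2 with hb_def
  have hπ := pi_pos
  have ha : 0 ≤ a := by positivity
  have hb : 0 ≤ b := by positivity
  have hsin_a : 2 / π * a ≤ sin a := mul_le_sin ha (by rw [ha_def]; linarith)
  have hsin_b : 2 / π * b ≤ sin b := mul_le_sin hb (by rw [hb_def]; linarith)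
  have hsin_d : sin d ≤ d := sin_le hd
  have hsin_r' : sin r' ≤ r' := sin_le hr'
  have hflat : 2 * (d * r') ≤ 4 * (a * b) := by rw [ha_def, hb_def]; nlinarith
  calc 4 / π ^ 2 * (sin d * sin r')
      ≤ 4 / π ^ 2 * (d * r') := by
        have hsin_r'_nonneg : 0 ≤ sin r' := sin_nonneg_of_nonneg_of_le_pi hr' (by linarith)
        exact mul_le_mul_of_nonneg_left (mul_le_mul hsin_d hsin_r' hsin_r'_nonneg hd) (by positivity)
    _ ≤ 2 * ((2 / π * a) * (2 / π * b)) := by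
        rw [show 2 * ((2 / π * a) * (2 / π * b)) = 2 / π ^ 2 * (4 * (a * b)) by ring,
          show 4 / π ^ 2 * (d * r') = 2 / π ^ 2 * (2 * (d * r')) by ring]
        gcongr
    _ ≤ 2 * (sin a * sin b) := by
        have hsin_a_nonneg : 0 ≤ sin a := (by positivity : 0 ≤ 2 / π * a).trans hsin_a
        gcongr
    _ = 2 * sin a * sin b := by ring

/-- If the sides `r, r', d ∈ (0, 1/10)` satisfy the triangle inequalities and
`d² + r'² > r²` (the flat angle opposite `r` is acute), then the spherical angle `αK`
opposite `r` on the unit sphere is bounded away from `π`: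
`1 + cos αK = (cos r − cos(d+r'))/(sin d sin r')
            = 2 sin((d+r'−r)/2) sin((d+r'+r)/2)/(sin d sin r') ≥ c`
for an absolute constant `c > 0`. -/
theorem stmt9 :
    ∃ c > 0, ∀ r r' d αK : ℝ,
      r ∈ Set.Ioo (0 : ℝ) (1 / 10) → r' ∈ Set.Ioo (0 : ℝ) (1 / 10) →
      d ∈ Set.Ioo (0 : ℝ) (1 / 10) → |d - r'| < r → r < d + r' →
      d ^ 2 + r' ^ 2 > r ^ 2 →
      Real.cos αK = (Real.cos r - Real.cos r' * Real.cos d) / (Real.sin r' * Real.sin d) →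
      1 + Real.cos αK = (Real.cos r - Real.cos (d + r')) / (Real.sin d * Real.sin r') ∧
      1 + Real.cos αK =
        2 * Real.sin ((d + r' - r) / 2) * Real.sin ((d + r' + r) / 2) /
          (Real.sin d * Real.sin r') ∧
      c ≤ 1 + Real.cos αK := by
  refine ⟨4 / π ^ 2, by positivity, ?_⟩
  rintro r r' d αK ⟨hr, hr1⟩ ⟨hr', hr'1⟩ ⟨hd, hd1⟩ - htri hacute hα
  have hπ := pi_gt_three
  have hsin_d : 0 < sin d := sin_pos_of_pos_of_lt_pi hd (by linarith)
  have hsin_r' : 0 < sin r' := sin_pos_of_pos_of_lt_pi hr' (by linarith)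
  have hden : 0 < sin d * sin r' := mul_pos hsin_d hsin_r'
  have hcos := one_add_cos_eq_of_cos_eq hsin_d.ne' hsin_r'.ne' hα
  have hprod := hcos.trans (by rw [cos_sub_cos_add_eq])
  refine ⟨hcos, hprod, ?_⟩
  rw [hprod, le_div_iff₀ hden]
  exact four_div_pi_sq_mul_sin_mul_sin_le hr.le hd.le hr'.le htri (by linarith) hacute
end
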